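/- For c > 0, λ > 0, the Gamma Laplace transform L(u) = (1 + u/λ)^{−c} is the pointwise limit as α → 0⁺ of the tempered stable Laplace transforms L_α(u) = exp(cΓ(−α)[(λ+u)^α − λ^α]) with Γ(−α) = −Γ(1−α)/α, for each u ≥ 0. -/

import Mathlib

open Real Filter Set Topology

/-
Write `-Γ(1-α)/α · (a^α - b^α) = -Γ(1-α) · ((a^α - 1)/α - (b^α - 1)/α)`. As `α → 0⁺` the factor
`Γ(1-α)` tends to `Γ(1) = 1` and each difference quotient `(x^α - 1)/α` tends to `log x`, so the
exponent tends to `-c · log(a/b)`, and `exp(-c · log(a/b)) = (a/b)^(-c)`.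
-/

lemma Real.tendsto_inv_mul_rpow_sub_rpow {a b : ℝ} (ha : 0 < a) (hb : 0 < b) :
    Tendsto (fun p : ℝ => p⁻¹ * (a ^ p - b ^ p)) (𝓝[>] 0) (𝓝 (log (a / b))) := by
  rw [log_div ha.ne' hb.ne']
  refine ((tendsto_rpow_sub_one_log ha).sub (tendsto_rpow_sub_one_log hb)).congr fun p => ?_
  ring

lemma Real.tendsto_Gamma_one_sub_nhds_zero :
    Tendsto (fun α : ℝ => Gamma (1 - α)) (𝓝 0) (𝓝 1) := by
  have hGamma : ContinuousAt Gamma 1 :=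
    (differentiableAt_Gamma fun m hm => by
      linarith [(Nat.cast_nonneg m : (0 : ℝ) ≤ m)]).continuousAt
  have hsub : Tendsto (fun α : ℝ => 1 - α) (𝓝 0) (𝓝 1) :=
    (continuous_sub_left 1).tendsto' 0 1 (sub_zero 1)
  have hcomp := hGamma.tendsto.comp hsub
  rwa [Gamma_one] at hcomp

lemma Real.tendsto_exp_mul_neg_Gamma_div_mul_rpow_sub_rpow (c : ℝ) {a b : ℝ} (ha : 0 < a)
    (hb : 0 < b) :
    Tendsto (fun α : ℝ => exp (c * (-Gamma (1 - α) / α) * (a ^ α - b ^ α)))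
      (𝓝[>] 0) (𝓝 ((a / b) ^ (-c))) := by
  have hexponent : Tendsto (fun α : ℝ => c * (-Gamma (1 - α) / α) * (a ^ α - b ^ α))
      (𝓝[>] 0) (𝓝 (c * -1 * log (a / b))) := by
    refine ((tendsto_Gamma_one_sub_nhds_zero.mono_left nhdsWithin_le_nhds).neg.const_mul c
      |>.mul (tendsto_inv_mul_rpow_sub_rpow ha hb)).congr fun α => ?_
    simp only [div_eq_mul_inv]
    ring
  rw [rpow_def_of_pos (div_pos ha hb), show log (a / b) * -c = c * -1 * log (a / b) by ring]
  exact (continuous_exp.tendsto _).comp hexponent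

theorem stmt14_general (c lam : ℝ) (hlam : 0 < lam) (u : ℝ) (hu : 0 ≤ u) :
    Tendsto (fun α : ℝ => Real.exp (c * (-Real.Gamma (1 - α) / α) *
        ((lam + u) ^ α - lam ^ α)))
      (nhdsWithin 0 (Ioi 0))
      (nhds ((1 + u / lam) ^ (-c))) := by
  have hratio : (lam + u) / lam = 1 + u / lam := by field_simp
  simpa only [hratio] using
    tendsto_exp_mul_neg_Gamma_div_mul_rpow_sub_rpow c (by linarith : 0 < lam + u) hlam

theorem stmt14 (c lam : ℝ) (hc : 0 < c) (hlam : 0 < lam) (u : ℝ) (hu : 0 ≤ u) :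
    Tendsto (fun α : ℝ => Real.exp (c * (-Real.Gamma (1 - α) / α) *
        ((lam + u) ^ α - lam ^ α)))
      (nhdsWithin 0 (Ioi 0))
      (nhds ((1 + u / lam) ^ (-c))) :=
  stmt14_general c lam hlam u hu
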